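/- The vector field X(x,y,z) = (y − z, −x + xz, x − xy) equals the cross product ∇H × ∇F where H = (x² + y² + z²)/2 and F = y − y²/2 + z − z²/2, at every point of ℝ³. -/

import Mathlib

/-- First partial derivative (∂/∂x) of a function on ℝ³ = ℝ×ℝ×ℝ. -/
noncomputable def pd1 (f : ℝ × ℝ × ℝ → ℝ) (p : ℝ × ℝ × ℝ) : ℝ := fderiv ℝ f p (1, 0, 0)

/-- Second partial derivative (∂/∂y). -/
noncomputable def pd2 (f : ℝ × ℝ × ℝ → ℝ) (p : ℝ × ℝ × ℝ) : ℝ := fderiv ℝ f p (0, 1, 0)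

/-- Third partial derivative (∂/∂z). -/
noncomputable def pd3 (f : ℝ × ℝ × ℝ → ℝ) (p : ℝ × ℝ × ℝ) : ℝ := fderiv ℝ f p (0, 0, 1)

/-- Gradient (∂f/∂x, ∂f/∂y, ∂f/∂z). -/
noncomputable def grad (f : ℝ × ℝ × ℝ → ℝ) (p : ℝ × ℝ × ℝ) : ℝ × ℝ × ℝ :=
  (pd1 f p, pd2 f p, pd3 f p)

/-- Standard cross product on ℝ³. -/
def cross (u v : ℝ × ℝ × ℝ) : ℝ × ℝ × ℝ :=
  (u.2.1 * v.2.2 - u.2.2 * v.2.1, u.2.2 * v.1 - u.1 * v.2.2, u.1 * v.2.1 - u.2.1 * v.1)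

/-- Euclidean inner product on ℝ³. -/
def dot (u v : ℝ × ℝ × ℝ) : ℝ := u.1 * v.1 + u.2.1 * v.2.1 + u.2.2 * v.2.2

/-- Divergence ∂X₁/∂x + ∂X₂/∂y + ∂X₃/∂z of a vector field on ℝ³. -/
noncomputable def divg (X : ℝ × ℝ × ℝ → ℝ × ℝ × ℝ) (p : ℝ × ℝ × ℝ) : ℝ :=
  pd1 (fun q => (X q).1) p + pd2 (fun q => (X q).2.1) p + pd3 (fun q => (X q).2.2) p

/-- Curl (∂h₃/∂y − ∂h₂/∂z, ∂h₁/∂z − ∂h₃/∂x, ∂h₂/∂x − ∂h₁/∂y) of a vector field on ℝ³. -/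
noncomputable def curl (X : ℝ × ℝ × ℝ → ℝ × ℝ × ℝ) (p : ℝ × ℝ × ℝ) : ℝ × ℝ × ℝ :=
  (pd2 (fun q => (X q).2.2) p - pd3 (fun q => (X q).2.1) p,
   pd3 (fun q => (X q).1) p - pd1 (fun q => (X q).2.2) p,
   pd1 (fun q => (X q).2.1) p - pd2 (fun q => (X q).1) p)

section
variable (p : ℝ × ℝ × ℝ)

private def e1 : ℝ × ℝ × ℝ →L[ℝ] ℝ := ContinuousLinearMap.fst ℝ ℝ (ℝ × ℝ)
/-!
Both Hamiltonians are sums of functions of one coordinate each, so their gradients are read off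
coordinatewise: `∇H = p` and `∇F = (0, 1 - y, 1 - z)`. The identity is then the cross product
`p × (0, 1 - y, 1 - z)`.
-/

theorem grad_eq_of_hasFDerivAt {f : ℝ × ℝ × ℝ → ℝ} {f' : ℝ × ℝ × ℝ →L[ℝ] ℝ} {p : ℝ × ℝ × ℝ}
    (hf : HasFDerivAt f f' p) : grad f p = (f' (1, 0, 0), f' (0, 1, 0), f' (0, 0, 1)) := by
  simp only [grad, pd1, pd2, pd3, hf.fderiv]

theorem grad_add_comp_coord {a b c : ℝ → ℝ} {a' b' c' : ℝ} {p : ℝ × ℝ × ℝ}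
    (ha : HasDerivAt a a' p.1) (hb : HasDerivAt b b' p.2.1) (hc : HasDerivAt c c' p.2.2) :
    grad (fun q => a q.1 + b q.2.1 + c q.2.2) p = (a', b', c') := by
  have hx := ha.hasFDerivAt.comp p (hasFDerivAt_fst (p := p))
  have hy := hb.hasFDerivAt.comp p (hasFDerivAt_snd (p := p)).fst
  have hz := hc.hasFDerivAt.comp p (hasFDerivAt_snd (p := p)).snd
  exact (grad_eq_of_hasFDerivAt ((hx.add hy).add hz)).trans (by simp)

theorem hasDerivAt_sq_div_two (t : ℝ) : HasDerivAt (fun s : ℝ => s ^ 2 / 2) t t := by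
  simpa using (hasDerivAt_pow 2 t).div_const 2

theorem hasDerivAt_sub_sq_div_two (t : ℝ) : HasDerivAt (fun s : ℝ => s - s ^ 2 / 2) (1 - t) t :=
  (hasDerivAt_id t).sub (hasDerivAt_sq_div_two t)

theorem grad_half_sq_norm (p : ℝ × ℝ × ℝ) :
    grad (fun q : ℝ × ℝ × ℝ => (q.1 ^ 2 + q.2.1 ^ 2 + q.2.2 ^ 2) / 2) p = p := by
  convert grad_add_comp_coord (hasDerivAt_sq_div_two p.1) (hasDerivAt_sq_div_two p.2.1)
    (hasDerivAt_sq_div_two p.2.2) using 3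
  ring

theorem grad_lorenz_hamiltonian_F (p : ℝ × ℝ × ℝ) :
    grad (fun q : ℝ × ℝ × ℝ => (q.2.1 - q.2.1 ^ 2 / 2) + (q.2.2 - q.2.2 ^ 2 / 2)) p
      = (0, 1 - p.2.1, 1 - p.2.2) := by
  convert grad_add_comp_coord (hasDerivAt_const p.1 (0 : ℝ)) (hasDerivAt_sub_sq_div_two p.2.1)
    (hasDerivAt_sub_sq_div_two p.2.2) using 3
  ring

/-- X(x,y,z) = (y − z, −x + xz, x − xy) equals ∇H × ∇F for
H = (x²+y²+z²)/2 and F = y − y²/2 + z − z²/2, at every point of ℝ³. -/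
theorem lorenz_eq_gradH_cross_gradF :
    ∀ p : ℝ × ℝ × ℝ,
      cross (grad (fun q => (q.1 ^ 2 + q.2.1 ^ 2 + q.2.2 ^ 2) / 2) p)
            (grad (fun q => (q.2.1 - q.2.1 ^ 2 / 2) + (q.2.2 - q.2.2 ^ 2 / 2)) p) =
        (p.2.1 - p.2.2, -p.1 + p.1 * p.2.2, p.1 - p.1 * p.2.1) := by
  intro p
  rw [grad_half_sq_norm, grad_lorenz_hamiltonian_F]
  simp only [cross, Prod.mk.injEq]
  exact ⟨by ring, by ring, by ring⟩
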